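/- Under the SISO discrete-time adaptive law setup with |k_p| · xᵀ Γ x < 2 xᵀ x for all nonzero x ∈ ℝ^N, the parameter increments are square-summable: ∑_{t=0}^{∞} ‖θ(t+1) − θ(t)‖² < ∞ and ∑_{t=0}^{∞} (ρ(t+1) − ρ(t))² < ∞ (i.e. θ(t+1) − θ(t) ∈ L² and ρ(t+1) − ρ(t) ∈ L²). -/

import Mathlib

/-!
Along the adaptive law the Lyapunov function
`V = |k_p| (θ - θ*)ᵀ Γ⁻¹ (θ - θ*) + (ρ - k_p)² / γ` drops by at least `(2 - c) ε² / m²`, where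
`c < 2` bounds both `|k_p| Γ` (relative to the identity) and `γ`; the strict inequality
`|k_p| Γ < 2` becomes such a uniform margin by compactness of the unit sphere. Telescoping makes
`ε² / m²` summable, and since `ζᵀζ ≤ m²` and `ξ² ≤ m²`, each squared increment is at most a
constant times `ε² / m²`.
-/

open Matrix BigOperators

theorem exists_pos_mul_le_of_sq_homogeneous {E : Type*} [NormedAddCommGroup E]
    [NormedSpace ℝ E] [FiniteDimensional ℝ E] {f g : E → ℝ} (hf : Continuous f)
    (hg : Continuous g) (hf_smul : ∀ (r : ℝ) x, f (r • x) = r ^ 2 * f x)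
    (hg_smul : ∀ (r : ℝ) x, g (r • x) = r ^ 2 * g x) (hf_pos : ∀ x, x ≠ 0 → 0 < f x) :
    ∃ δ > 0, ∀ x, δ * g x ≤ f x := by
  have hS : IsCompact (Metric.sphere (0 : E) 1) := isCompact_sphere 0 1
  obtain ⟨μ, hμ, hfμ⟩ := hS.exists_forall_le' hf.continuousOn (a := 0)
    fun x hx => hf_pos x (ne_zero_of_mem_unit_sphere ⟨x, hx⟩)
  obtain ⟨B, hB⟩ := hS.bddAbove_image hg.continuousOn
  set M := max B 1
  have hM : 0 < M := lt_max_of_lt_right one_pos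
  refine ⟨μ / M, div_pos hμ hM, fun x => ?_⟩
  rcases eq_or_ne x 0 with rfl | hx
  · have hf0 : f 0 = 0 := by simpa using hf_smul 0 0
    have hg0 : g 0 = 0 := by simpa using hg_smul 0 0
    simp [hf0, hg0]
  set u := ‖x‖⁻¹ • x
  have hu : u ∈ Metric.sphere (0 : E) 1 := by simp [u, norm_smul, hx]
  have hxu : x = ‖x‖ • u := by simp [u, smul_smul, hx]
  have hgu : g u ≤ M := (hB ⟨u, hu, rfl⟩).trans (le_max_left B 1)
  have hu_le : μ / M * g u ≤ f u := calc
    μ / M * g u ≤ μ / M * M := by gcongr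
    _ = μ := div_mul_cancel₀ μ hM.ne'
    _ ≤ f u := hfμ u hu
  rw [hxu, hf_smul, hg_smul, mul_left_comm]
  exact mul_le_mul_of_nonneg_left hu_le (sq_nonneg _)

namespace Real

theorem abs_mul_sign (r : ℝ) : |r| * sign r = r := by
  rcases lt_trichotomy r 0 with h | rfl | h
  · simp [abs_of_neg h, sign_of_neg h]
  · simp
  · simp [abs_of_pos h, sign_of_pos h]

theorem abs_mul_sign_sq (r : ℝ) : |r| * sign r ^ 2 = |r| := by
  rcases lt_trichotomy r 0 with h | rfl | h
  · simp [sign_of_neg h]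
  · simp
  · simp [sign_of_pos h]

theorem sign_sq_le_one (r : ℝ) : sign r ^ 2 ≤ 1 := by
  rcases sign_apply_eq r with h | h | h <;> simp [h]

end Real

namespace Matrix

variable {m n : Type*} [Fintype m] [Fintype n]

theorem dotProduct_self_nonneg {R : Type*} [Ring R] [LinearOrder R] [IsStrictOrderedRing R]
    (v : n → R) : 0 ≤ v ⬝ᵥ v :=
  Fintype.sum_nonneg fun i => mul_self_nonneg (v i)

theorem dotProduct_self_pos {R : Type*} [Ring R] [LinearOrder R] [IsStrictOrderedRing R]
    {v : n → R} (hv : v ≠ 0) : 0 < v ⬝ᵥ v :=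
  (dotProduct_self_nonneg v).lt_of_ne' (dotProduct_self_eq_zero.not.2 hv)

theorem smul_dotProduct_smul {R : Type*} [CommSemiring R] (r : R) (x y : n → R) :
    r • x ⬝ᵥ r • y = r ^ 2 * (x ⬝ᵥ y) := by
  rw [smul_dotProduct, dotProduct_smul, smul_eq_mul, smul_eq_mul, ← mul_assoc, sq]

theorem exists_dotProduct_mulVec_le_of_lt {A : Matrix n n ℝ} {b : ℝ}
    (h : ∀ x, x ≠ 0 → x ⬝ᵥ A *ᵥ x < b * (x ⬝ᵥ x)) :
    ∃ c < b, ∀ x, x ⬝ᵥ A *ᵥ x ≤ c * (x ⬝ᵥ x) := by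
  obtain ⟨δ, hδ, hle⟩ := exists_pos_mul_le_of_sq_homogeneous
    (f := fun x : n → ℝ => b * (x ⬝ᵥ x) - x ⬝ᵥ A *ᵥ x) (g := fun x => x ⬝ᵥ x)
    (by fun_prop) (by fun_prop)
    (fun r x => by simp only [mulVec_smul, smul_dotProduct_smul]; ring)
    (fun r x => smul_dotProduct_smul r x x) (fun x hx => sub_pos.2 (h x hx))
  exact ⟨b - δ, by linarith, fun x => by linarith [hle x]⟩

theorem exists_mulVec_dotProduct_mulVec_le (A : Matrix m n ℝ) :
    ∃ K, 0 ≤ K ∧ ∀ x, A *ᵥ x ⬝ᵥ A *ᵥ x ≤ K * (x ⬝ᵥ x) := by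
  obtain ⟨δ, hδ, hle⟩ := exists_pos_mul_le_of_sq_homogeneous
    (f := fun x : n → ℝ => x ⬝ᵥ x) (g := fun x => A *ᵥ x ⬝ᵥ A *ᵥ x)
    (by fun_prop) (by fun_prop) (fun r x => smul_dotProduct_smul r x x)
    (fun r x => by simp only [mulVec_smul, smul_dotProduct_smul])
    (fun x => dotProduct_self_pos)
  refine ⟨δ⁻¹, inv_nonneg.2 hδ.le, fun x => ?_⟩
  rw [← div_eq_inv_mul, le_div_iff₀ hδ, mul_comm]
  exact hle x

theorem dotProduct_inv_mulVec_sub_smul_mulVec [DecidableEq n] {P : Matrix n n ℝ}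
    (hP : P.IsSymm) (hdet : IsUnit P.det) (φ w : n → ℝ) (a : ℝ) :
    (φ - a • P *ᵥ w) ⬝ᵥ P⁻¹ *ᵥ (φ - a • P *ᵥ w)
      = φ ⬝ᵥ P⁻¹ *ᵥ φ - 2 * a * (φ ⬝ᵥ w) + a ^ 2 * (w ⬝ᵥ P *ᵥ w) := by
  have hcancel : P⁻¹ *ᵥ P *ᵥ w = w := by rw [mulVec_mulVec, nonsing_inv_mul P hdet, one_mulVec]
  have hsymm : P *ᵥ w ⬝ᵥ P⁻¹ *ᵥ φ = φ ⬝ᵥ w := by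
    rw [dotProduct_comm, dotProduct_mulVec, ← mulVec_transpose, hP.eq, mulVec_mulVec,
      mul_nonsing_inv P hdet, one_mulVec]
  simp only [mulVec_sub, mulVec_smul, hcancel, sub_dotProduct, dotProduct_sub, smul_dotProduct,
    dotProduct_smul, smul_eq_mul, hsymm, dotProduct_comm (P *ᵥ w) w]
  ring

end Matrix

theorem summable_of_mul_le_sub_succ {g V : ℕ → ℝ} {κ : ℝ} (hκ : 0 < κ) (hg : ∀ t, 0 ≤ g t)
    (hV : ∀ t, 0 ≤ V t) (hdec : ∀ t, κ * g t ≤ V t - V (t + 1)) : Summable g := by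
  refine summable_of_sum_range_le (c := V 0 / κ) hg fun n => (le_div_iff₀' hκ).2 ?_
  calc κ * ∑ t ∈ Finset.range n, g t
      ≤ ∑ t ∈ Finset.range n, (V t - V (t + 1)) := by
        rw [Finset.mul_sum]; exact Finset.sum_le_sum fun t _ => hdec t
    _ = V 0 - V n := Finset.sum_range_sub' V n
    _ ≤ V 0 := sub_le_self _ (hV n)

section AdaptiveLaw

variable {n : Type*} [Fintype n] {Γ : Matrix n n ℝ} {kp γ : ℝ}

noncomputable def adaptiveLyapunov [DecidableEq n] (kp γ : ℝ) (Γ : Matrix n n ℝ) (φ : n → ℝ)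
    (ψ : ℝ) : ℝ :=
  |kp| * (φ ⬝ᵥ Γ⁻¹ *ᵥ φ) + ψ ^ 2 / γ

theorem adaptiveLyapunov_nonneg [DecidableEq n] (hΓ : Γ.PosDef) (hγ : 0 ≤ γ) (φ : n → ℝ)
    (ψ : ℝ) :
    0 ≤ adaptiveLyapunov kp γ Γ φ ψ :=
  add_nonneg (mul_nonneg (abs_nonneg kp) (hΓ.inv.posSemidef.dotProduct_mulVec_nonneg φ))
    (div_nonneg (sq_nonneg ψ) hγ)

theorem exists_adaptation_gain_le (hΓ : ∀ x, x ≠ 0 → |kp| * (x ⬝ᵥ Γ *ᵥ x) < 2 * (x ⬝ᵥ x))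
    (hγ : 0 ≤ γ) (hγ2 : γ < 2) :
    ∃ c < 2, ∀ (w : n → ℝ) (ξ μ : ℝ), w ⬝ᵥ w + ξ ^ 2 ≤ μ →
      |kp| * (w ⬝ᵥ Γ *ᵥ w) + γ * ξ ^ 2 ≤ c * μ := by
  obtain ⟨c₀, hc₀2, hc₀⟩ := exists_dotProduct_mulVec_le_of_lt (A := |kp| • Γ) fun x hx => by
    rw [smul_mulVec, dotProduct_smul, smul_eq_mul]; exact hΓ x hx
  refine ⟨max c₀ γ, max_lt hc₀2 hγ2, fun w ξ μ hμ => ?_⟩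
  have hw := hc₀ w
  rw [smul_mulVec, dotProduct_smul, smul_eq_mul] at hw
  calc |kp| * (w ⬝ᵥ Γ *ᵥ w) + γ * ξ ^ 2 ≤ max c₀ γ * (w ⬝ᵥ w + ξ ^ 2) := by
        rw [mul_add]
        refine add_le_add (hw.trans ?_) ?_ <;> gcongr
        exacts [dotProduct_self_nonneg w, le_max_left _ _, le_max_right _ _]
    _ ≤ max c₀ γ * μ := by gcongr

theorem adaptiveLyapunov_update [DecidableEq n] (hΓ : Γ.IsSymm) (hdet : IsUnit Γ.det)
    (hγ : γ ≠ 0) (φ w : n → ℝ) (ψ ξ a : ℝ) :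
    adaptiveLyapunov kp γ Γ (φ - (Real.sign kp * a) • Γ *ᵥ w) (ψ - γ * ξ * a)
      = adaptiveLyapunov kp γ Γ φ ψ - 2 * a * (kp * (φ ⬝ᵥ w) + ψ * ξ)
        + a ^ 2 * (|kp| * (w ⬝ᵥ Γ *ᵥ w) + γ * ξ ^ 2) := by
  have hψ : (ψ - γ * ξ * a) ^ 2 / γ = ψ ^ 2 / γ - 2 * a * ψ * ξ + γ * a ^ 2 * ξ ^ 2 := by
    field_simp; ring
  rw [adaptiveLyapunov, adaptiveLyapunov, dotProduct_inv_mulVec_sub_smul_mulVec hΓ hdet, hψ]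
  linear_combination (-2 * a * (φ ⬝ᵥ w)) * Real.abs_mul_sign kp
    + (a ^ 2 * (w ⬝ᵥ Γ *ᵥ w)) * Real.abs_mul_sign_sq kp

theorem adaptiveLyapunov_update_le [DecidableEq n] (hΓ : Γ.IsSymm) (hdet : IsUnit Γ.det)
    (hγ : γ ≠ 0) {φ w : n → ℝ} {ψ ξ ε μ c : ℝ} (hμ : 0 < μ) (hε : ε = kp * (φ ⬝ᵥ w) + ψ * ξ)
    (hc : |kp| * (w ⬝ᵥ Γ *ᵥ w) + γ * ξ ^ 2 ≤ c * μ) :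
    adaptiveLyapunov kp γ Γ (φ - (Real.sign kp * ε / μ) • Γ *ᵥ w) (ψ - γ * ξ * ε / μ)
      ≤ adaptiveLyapunov kp γ Γ φ ψ - (2 - c) * (ε ^ 2 / μ) := by
  rw [mul_div_assoc, mul_div_assoc, adaptiveLyapunov_update hΓ hdet hγ, ← hε]
  have : (ε / μ) ^ 2 * (|kp| * (w ⬝ᵥ Γ *ᵥ w) + γ * ξ ^ 2) ≤ c * (ε ^ 2 / μ) := calc
    _ ≤ (ε / μ) ^ 2 * (c * μ) := by gcongr
    _ = c * (ε ^ 2 / μ) := by field_simp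
  linarith [show 2 * (ε / μ) * ε = 2 * (ε ^ 2 / μ) by ring]

theorem sum_sq_sub_le_of_update {K ε μ : ℝ} (hK : 0 ≤ K)
    (hΓK : ∀ x, Γ *ᵥ x ⬝ᵥ Γ *ᵥ x ≤ K * (x ⬝ᵥ x)) (hμ : 0 < μ) {θ θ' w : n → ℝ}
    (hw : w ⬝ᵥ w ≤ μ) (hθ' : θ' = θ - (Real.sign kp * ε / μ) • Γ *ᵥ w) :
    ∑ i, (θ' i - θ i) ^ 2 ≤ K * (ε ^ 2 / μ) := by
  have hΔ : θ' - θ = (-(Real.sign kp * ε / μ)) • Γ *ᵥ w := by rw [hθ', neg_smul]; abel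
  calc ∑ i, (θ' i - θ i) ^ 2 = (θ' - θ) ⬝ᵥ (θ' - θ) := by simp only [dotProduct, Pi.sub_apply, sq]
    _ = Real.sign kp ^ 2 * (ε / μ) ^ 2 * (Γ *ᵥ w ⬝ᵥ Γ *ᵥ w) := by
        rw [hΔ, smul_dotProduct_smul]; ring
    _ ≤ 1 * (ε / μ) ^ 2 * (K * μ) := by
        gcongr
        · exact dotProduct_self_nonneg _
        · exact Real.sign_sq_le_one kp
        · exact (hΓK w).trans (mul_le_mul_of_nonneg_left hw hK)
    _ = K * (ε ^ 2 / μ) := by field_simp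

theorem sq_sub_le_of_update {ρ ρ' ξ ε μ : ℝ} (hμ : 0 < μ) (hξ : ξ ^ 2 ≤ μ)
    (hρ' : ρ' = ρ - γ * ξ * ε / μ) : (ρ' - ρ) ^ 2 ≤ γ ^ 2 * (ε ^ 2 / μ) := calc
  (ρ' - ρ) ^ 2 = γ ^ 2 * (ε / μ) ^ 2 * ξ ^ 2 := by rw [hρ']; ring
  _ ≤ γ ^ 2 * (ε / μ) ^ 2 * μ := by gcongr
  _ = γ ^ 2 * (ε ^ 2 / μ) := by field_simp

end AdaptiveLaw

theorem siso_discrete_adaptive_law_increments_L2_general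
    (N : ℕ)
    (ζ : ℕ → Fin N → ℝ) (ξ : ℕ → ℝ)
    (kp : ℝ)
    (θs : Fin N → ℝ)
    (Γ : Matrix (Fin N) (Fin N) ℝ) (hΓ : Γ.PosDef)
    (hΓ2 : ∀ x : Fin N → ℝ, x ≠ 0 →
      |kp| * (∑ i, x i * (Γ.mulVec x) i) < 2 * ∑ i, x i * x i)
    (γ : ℝ) (hγ1 : 0 < γ) (hγ2 : γ < 2)
    (θ : ℕ → Fin N → ℝ) (ρ : ℕ → ℝ)
    (m ε : ℕ → ℝ)
    (hm : ∀ t, m t = Real.sqrt (1 + (∑ i, ζ t i * ζ t i) + ξ t ^ 2))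
    (hε : ∀ t, ε t = kp * (∑ i, (θ t i - θs i) * ζ t i) + (ρ t - kp) * ξ t)
    (hθ : ∀ t, θ (t + 1) = θ t - (Real.sign kp * ε t / m t ^ 2) • Γ.mulVec (ζ t))
    (hρ : ∀ t, ρ (t + 1) = ρ t - γ * ξ t * ε t / m t ^ 2) :
    Summable (fun t => ∑ i, (θ (t + 1) i - θ t i) ^ 2) ∧
    Summable (fun t => (ρ (t + 1) - ρ t) ^ 2) := by
  obtain ⟨c, hc2, hc⟩ := exists_adaptation_gain_le hΓ2 hγ1.le hγ2
  obtain ⟨K, hK, hΓK⟩ := exists_mulVec_dotProduct_mulVec_le Γ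
  have hΓs : Γ.IsSymm := (conjTranspose_eq_transpose_of_trivial Γ).symm.trans hΓ.isHermitian.eq
  have hdet : IsUnit Γ.det := (isUnit_iff_isUnit_det Γ).1 hΓ.isUnit
  have hε' : ∀ t, ε t = kp * ((θ t - θs) ⬝ᵥ ζ t) + (ρ t - kp) * ξ t := hε
  have hζ (t : ℕ) : 0 ≤ ζ t ⬝ᵥ ζ t := dotProduct_self_nonneg (ζ t)
  have hm2 (t : ℕ) : m t ^ 2 = 1 + (ζ t ⬝ᵥ ζ t + ξ t ^ 2) := by
    rw [hm, add_assoc]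
    exact Real.sq_sqrt (add_nonneg zero_le_one (add_nonneg (hζ t) (sq_nonneg _)))
  have hζm (t : ℕ) : ζ t ⬝ᵥ ζ t ≤ m t ^ 2 := by linarith [hm2 t, sq_nonneg (ξ t)]
  have hξm (t : ℕ) : ξ t ^ 2 ≤ m t ^ 2 := by linarith [hm2 t, hζ t]
  have hm_pos (t : ℕ) : 0 < m t ^ 2 := by linarith [hm2 t, hζ t, sq_nonneg (ξ t)]
  have hsum : Summable fun t => ε t ^ 2 / m t ^ 2 := by
    refine summable_of_mul_le_sub_succ (sub_pos.2 hc2) (fun t => by positivity)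
      (V := fun t => adaptiveLyapunov kp γ Γ (θ t - θs) (ρ t - kp))
      (fun t => adaptiveLyapunov_nonneg hΓ hγ1.le _ _) fun t => ?_
    have hθe : θ (t + 1) - θs = θ t - θs - (Real.sign kp * ε t / m t ^ 2) • Γ *ᵥ ζ t := by
      rw [hθ]; abel
    have hρe : ρ (t + 1) - kp = ρ t - kp - γ * ξ t * ε t / m t ^ 2 := by rw [hρ]; ring
    have := adaptiveLyapunov_update_le hΓs hdet hγ1.ne' (hm_pos t) (hε' t)
      (hc _ _ _ (by linarith [hm2 t]))
    rw [hθe, hρe]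
    linarith
  exact ⟨(hsum.mul_left K).of_nonneg_of_le (fun t => by positivity)
      fun t => sum_sq_sub_le_of_update hK hΓK (hm_pos t) (hζm t) (hθ t),
    (hsum.mul_left (γ ^ 2)).of_nonneg_of_le (fun t => sq_nonneg _)
      fun t => sq_sub_le_of_update (hm_pos t) (hξm t) (hρ t)⟩

/-- SISO discrete-time adaptive law (Lemma 2.1): under `Γ < (2/|k_p|) I`,
the parameter increments `θ(t+1) − θ(t)` and `ρ(t+1) − ρ(t)` are square-summable. -/
theorem siso_discrete_adaptive_law_increments_L2
    (N : ℕ) (hN : 0 < N)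
    (ζ : ℕ → Fin N → ℝ) (ξ : ℕ → ℝ)
    (kp : ℝ) (hkp : kp ≠ 0)
    (θs : Fin N → ℝ)
    (Γ : Matrix (Fin N) (Fin N) ℝ) (hΓ : Γ.PosDef)
    (hΓ2 : ∀ x : Fin N → ℝ, x ≠ 0 →
      |kp| * (∑ i, x i * (Γ.mulVec x) i) < 2 * ∑ i, x i * x i)
    (γ : ℝ) (hγ1 : 0 < γ) (hγ2 : γ < 2)
    (θ : ℕ → Fin N → ℝ) (ρ : ℕ → ℝ)
    (m ε : ℕ → ℝ)
    (hm : ∀ t, m t = Real.sqrt (1 + (∑ i, ζ t i * ζ t i) + ξ t ^ 2))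
    (hε : ∀ t, ε t = kp * (∑ i, (θ t i - θs i) * ζ t i) + (ρ t - kp) * ξ t)
    (hθ : ∀ t, θ (t + 1) = θ t - (Real.sign kp * ε t / m t ^ 2) • Γ.mulVec (ζ t))
    (hρ : ∀ t, ρ (t + 1) = ρ t - γ * ξ t * ε t / m t ^ 2) :
    Summable (fun t => ∑ i, (θ (t + 1) i - θ t i) ^ 2) ∧
    Summable (fun t => (ρ (t + 1) - ρ t) ^ 2) :=
  siso_discrete_adaptive_law_increments_L2_general N ζ ξ kp θs Γ hΓ hΓ2 γ hγ1 hγ2 θ ρ m ε hm hε hθ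
    hρ
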